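/- Let X be a nonempty topological space and g : X → X a homeomorphism. Suppose there exists an open set V ⊆ X such that the closure of g(V) is contained in V, the union ⋃_{k ∈ ℤ} g^k(V) equals X, and the intersection ⋂_{k ∈ ℤ} g^k(V) is empty. Then for every finite collection of points x₁, …, x_l ∈ X, the closure of the union of their forward orbits ⋃_{i=1}^{l} {gⁿ(x_i) : n ∈ ℕ} is a proper subset of X (i.e., the forward orbits of finitely many points can never have dense union). -/

import Mathlib

/-!
Write `S k = g^k(V)`. Since `g(V) ⊆ V`, the sets `S k` decrease in `k` and each is forward
invariant, so finitely many points, each lying in some `S k`, have their forward orbits in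
`S K` for a common lower bound `K` of their levels. Then
`closure (S K) = g^(K-1)(closure (g V)) ⊆ S (K-1)`, and no `S k` is all of `X`, because
`S k = X` would force every `S m = g^(m-k)(S k)` to be `X`, contradicting `⋂ S m = ∅`.
-/

open Set

namespace Equiv.Perm

variable {α : Type*} {σ : Perm α} {V : Set α}

theorem image_zpow_image_zpow (σ : Perm α) (V : Set α) (a k : ℤ) :
    ⇑(σ ^ a) '' (⇑(σ ^ k) '' V) = ⇑(σ ^ (a + k)) '' V := by
  rw [image_image, zpow_add]
  rfl

theorem antitone_image_zpow (h : σ '' V ⊆ V) : Antitone fun k : ℤ => ⇑(σ ^ k) '' V := by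
  refine antitone_int_of_succ_le fun k => ?_
  rw [← image_zpow_image_zpow σ V k 1, zpow_one]
  exact image_mono h

theorem mapsTo_image_zpow (h : σ '' V ⊆ V) (k : ℤ) :
    MapsTo σ (⇑(σ ^ k) '' V) (⇑(σ ^ k) '' V) := by
  rw [mapsTo_iff_image_subset]
  have : ⇑(σ ^ (k + 1)) '' V ⊆ ⇑(σ ^ k) '' V := antitone_image_zpow h (Int.le_add_one le_rfl)
  rwa [add_comm, ← image_zpow_image_zpow, zpow_one] at this

theorem image_zpow_ne_univ [Nonempty α] (h : ⋂ k : ℤ, ⇑(σ ^ k) '' V = ∅) (k : ℤ) :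
    ⇑(σ ^ k) '' V ≠ univ := by
  intro hk
  have hall : ∀ m : ℤ, ⇑(σ ^ m) '' V = univ := fun m => by
    rw [← sub_add_cancel m k, ← image_zpow_image_zpow, hk]
    exact image_univ_of_surjective (σ ^ (m - k)).surjective
  simp [hall] at h

theorem exists_forall_mem_image_zpow {ι : Type*} [Finite ι] (h : σ '' V ⊆ V)
    (hV : ⋃ k : ℤ, ⇑(σ ^ k) '' V = univ) (x : ι → α) :
    ∃ K : ℤ, ∀ i, x i ∈ ⇑(σ ^ K) '' V := by
  have hmem (i : ι) : ∃ k : ℤ, x i ∈ ⇑(σ ^ k) '' V := mem_iUnion.1 (hV ▸ mem_univ _)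
  choose κ hκ using hmem
  obtain ⟨K, hK⟩ := (finite_range κ).bddBelow
  exact ⟨K, fun i => antitone_image_zpow h (hK ⟨i, rfl⟩) (hκ i)⟩

end Equiv.Perm

namespace Homeomorph

variable {X : Type*} [TopologicalSpace X]

theorem coe_toEquiv_zpow (g : X ≃ₜ X) (k : ℤ) : ⇑(g.toEquiv ^ k) = ⇑(g ^ k) := by
  let toPerm : (X ≃ₜ X) →* Equiv.Perm X := ⟨⟨Homeomorph.toEquiv, rfl⟩, fun _ _ => rfl⟩
  exact congrArg DFunLike.coe (map_zpow toPerm g k).symm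

theorem closure_image_zpow_subset {g : X ≃ₜ X} {V : Set X} (h : closure (g '' V) ⊆ V)
    (k : ℤ) : closure (⇑(g.toEquiv ^ k) '' V) ⊆ ⇑(g.toEquiv ^ (k - 1)) '' V := by
  rw [← sub_add_cancel k 1, ← Equiv.Perm.image_zpow_image_zpow, zpow_one, add_sub_cancel_right,
    coe_toEquiv_zpow, ← image_closure]
  exact image_mono h

end Homeomorph

/-- If a homeomorphism `g` of a nonempty topological space `X` admits an open set `V`
with `closure (g '' V) ⊆ V`, `⋃ k : ℤ, g^k '' V = univ` and `⋂ k : ℤ, g^k '' V = ∅`,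
then the union of the forward orbits of any finitely many points is never dense:
its closure is a proper subset of `X`. -/
theorem stmt_0 {X : Type*} [TopologicalSpace X] [Nonempty X] (g : X ≃ₜ X)
    (hV : ∃ V : Set X, IsOpen V ∧ closure (⇑g '' V) ⊆ V ∧
      (⋃ k : ℤ, ⇑(g.toEquiv ^ k) '' V) = Set.univ ∧
      (⋂ k : ℤ, ⇑(g.toEquiv ^ k) '' V) = ∅) :
    ∀ (l : ℕ) (x : Fin l → X),
      closure (⋃ i : Fin l, Set.range fun n : ℕ => (⇑g)^[n] (x i)) ≠ Set.univ := by
  obtain ⟨V, -, hcl, hunion, hinter⟩ := hV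
  intro l x hdense
  have hgV : g.toEquiv '' V ⊆ V := subset_closure.trans hcl
  obtain ⟨K, hK⟩ := Equiv.Perm.exists_forall_mem_image_zpow hgV hunion x
  have horbits : (⋃ i, Set.range fun n : ℕ => (⇑g)^[n] (x i)) ⊆ ⇑(g.toEquiv ^ K) '' V :=
    iUnion_subset fun i => range_subset_iff.2 fun n =>
      (Equiv.Perm.mapsTo_image_zpow hgV K).iterate n (hK i)
  refine Equiv.Perm.image_zpow_ne_univ hinter (K - 1) (univ_subset_iff.1 ?_)
  exact hdense ▸ (closure_mono horbits).trans (Homeomorph.closure_image_zpow_subset hcl K)
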